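/- Let (E, ℰ) be a measurable space, ν a probability measure on E, and p : E → [0,1) a measurable function such that θ := ∫_E 1/(1−p(x)) ν(dx) < ∞. Define the Markov kernel Q(x, A) = p(x)·δ_x(A) + (1−p(x))·ν(A) and the measure π(dx) = ν(dx)/(θ(1−p(x))). Then π is a probability measure on E and π is invariant for Q: for every measurable A ⊆ E, ∫_E Q(x, A) π(dx) = π(A). -/

import Mathlib

open MeasureTheory ENNReal

/-- `θ = ∫ 1/(1 − p(x)) ν(dx)`. -/
noncomputable def mhTheta {E : Type*} [MeasurableSpace E] (ν : Measure E) (p : E → ℝ) : ℝ :=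
  ∫ x, 1 / (1 - p x) ∂ν

/-- The measure `π(dx) = ν(dx)/(θ(1 − p(x)))`. -/
noncomputable def mhPi {E : Type*} [MeasurableSpace E] (ν : Measure E) (p : E → ℝ) :
    Measure E :=
  ν.withDensity fun x => ENNReal.ofReal (1 / (mhTheta ν p * (1 - p x)))

/-- The Markov kernel `Q(x, ·) = p(x)·δ_x + (1 − p(x))·ν`. -/
noncomputable def mhQ {E : Type*} [MeasurableSpace E] (ν : Measure E) (p : E → ℝ)
    (x : E) : Measure E :=
  ENNReal.ofReal (p x) • Measure.dirac x + ENNReal.ofReal (1 - p x) • ν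

/-! With density `f = 1/(θ(1 − p))`, the mass `π` sends into a set `A` is `∫_A p f dν` (staying)
plus `ν(A) ∫ (1 − p) f dν = ν(A)/θ` (moving), and `p f + 1/θ = f` pointwise, so it equals
`∫_A f dν = π(A)`. The normalisation `∫ f dν = 1` is the definition of `θ`. -/

section MixtureKernel

variable {E : Type*} [MeasurableSpace E]

theorem lintegral_smul_dirac_add_smul_apply (μ ν : Measure E) {a b : E → ℝ≥0∞}
    (hb : Measurable b) {A : Set E} (hA : MeasurableSet A) :
    ∫⁻ x, (a x • Measure.dirac x + b x • ν) A ∂μ = ∫⁻ x in A, a x ∂μ + (∫⁻ x, b x ∂μ) * ν A := by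
  have hQ : ∀ x, (a x • Measure.dirac x + b x • ν) A = A.indicator a x + b x * ν A := by
    intro x
    simp only [Measure.add_apply, Measure.smul_apply, Measure.dirac_apply' _ hA, smul_eq_mul,
      Set.indicator, Pi.one_apply, mul_ite, mul_one, mul_zero]
  simp_rw [hQ]
  rw [lintegral_add_right _ (hb.mul_const _), lintegral_indicator hA, lintegral_mul_const _ hb]

theorem lintegral_smul_dirac_add_smul_withDensity_apply (ν : Measure E) {f a b : E → ℝ≥0∞}
    (hf : Measurable f) (ha : Measurable a) (hb : Measurable b)
    (hbal : ∀ x, f x * a x + ∫⁻ y, f y * b y ∂ν = f x) {A : Set E} (hA : MeasurableSet A) :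
    ∫⁻ x, (a x • Measure.dirac x + b x • ν) A ∂(ν.withDensity f) = ν.withDensity f A := by
  rw [lintegral_smul_dirac_add_smul_apply _ _ hb hA, withDensity_apply _ hA,
    setLIntegral_withDensity_eq_setLIntegral_mul _ hf ha hA,
    lintegral_withDensity_eq_lintegral_mul _ hf hb, ← setLIntegral_const,
    ← lintegral_add_right _ measurable_const]
  exact lintegral_congr fun x => hbal x

end MixtureKernel

section MetropolisHastings

variable {E : Type*} [MeasurableSpace E] {ν : Measure E} {p : E → ℝ}

theorem one_le_mhTheta [IsProbabilityMeasure ν] (hp_range : ∀ x, p x ∈ Set.Ico (0 : ℝ) 1)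
    (hp_int : Integrable (fun x => 1 / (1 - p x)) ν) : 1 ≤ mhTheta ν p := by
  have h := integral_mono (integrable_const (1 : ℝ)) hp_int fun x =>
    one_le_one_div (sub_pos.2 (hp_range x).2) (sub_le_self 1 (hp_range x).1)
  simpa [mhTheta] using h

theorem measurable_mhPi_density (hp_meas : Measurable p) :
    Measurable fun x => ENNReal.ofReal (1 / (mhTheta ν p * (1 - p x))) :=
  (measurable_const.div ((measurable_const.sub hp_meas).const_mul _)).ennreal_ofReal

theorem isProbabilityMeasure_mhPi [IsProbabilityMeasure ν]
    (hp_range : ∀ x, p x ∈ Set.Ico (0 : ℝ) 1) (hp_int : Integrable (fun x => 1 / (1 - p x)) ν) :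
    IsProbabilityMeasure (mhPi ν p) := by
  have hθ : 0 < mhTheta ν p := zero_lt_one.trans_le (one_le_mhTheta hp_range hp_int)
  have hdensity : ∀ x, 1 / (mhTheta ν p * (1 - p x)) = (mhTheta ν p)⁻¹ * (1 / (1 - p x)) :=
    fun x => by rw [one_div, mul_inv, one_div]
  have hnonneg : 0 ≤ᵐ[ν] fun x => (mhTheta ν p)⁻¹ * (1 / (1 - p x)) := .of_forall fun x =>
    mul_nonneg (inv_nonneg.2 hθ.le) (one_div_nonneg.2 (sub_pos.2 (hp_range x).2).le)
  constructor
  rw [mhPi, withDensity_apply _ MeasurableSet.univ, Measure.restrict_univ]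
  simp_rw [hdensity]
  rw [← ofReal_integral_eq_lintegral_ofReal (hp_int.const_mul _) hnonneg, integral_const_mul,
    ← mhTheta, inv_mul_cancel₀ hθ.ne', ofReal_one]

theorem lintegral_mhQ_apply [IsProbabilityMeasure ν] (hp_meas : Measurable p)
    (hp_range : ∀ x, p x ∈ Set.Ico (0 : ℝ) 1) {A : Set E} (hA : MeasurableSet A) :
    ∫⁻ x, mhQ ν p x A ∂(mhPi ν p) = mhPi ν p A := by
  set θ := mhTheta ν p
  have hne : ∀ x, 1 - p x ≠ 0 := fun x => (sub_pos.2 (hp_range x).2).ne'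
  have hθ : 0 ≤ θ := integral_nonneg fun x => one_div_nonneg.2 (sub_pos.2 (hp_range x).2).le
  have hf_nonneg : ∀ x, 0 ≤ 1 / (θ * (1 - p x)) := fun x =>
    one_div_nonneg.2 (mul_nonneg hθ (sub_pos.2 (hp_range x).2).le)
  have hmove : ∀ x, ENNReal.ofReal (1 / (θ * (1 - p x))) * ENNReal.ofReal (1 - p x)
      = ENNReal.ofReal θ⁻¹ := fun x => by
    rw [← ofReal_mul (hf_nonneg x), one_div, mul_inv, mul_assoc, inv_mul_cancel₀ (hne x), mul_one]
  have hstay : ∀ x, 1 / (θ * (1 - p x)) * p x + θ⁻¹ = 1 / (θ * (1 - p x)) := fun x => by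
    rw [one_div, mul_inv]
    linear_combination (-θ⁻¹) * inv_mul_cancel₀ (hne x)
  have hbalance : ∀ x, ENNReal.ofReal (1 / (θ * (1 - p x))) * ENNReal.ofReal (p x)
      + ∫⁻ y, ENNReal.ofReal (1 / (θ * (1 - p y))) * ENNReal.ofReal (1 - p y) ∂ν
      = ENNReal.ofReal (1 / (θ * (1 - p x))) := fun x => by
    simp_rw [hmove, lintegral_const, measure_univ, mul_one]
    rw [← ofReal_mul (hf_nonneg x), ← ofReal_add (mul_nonneg (hf_nonneg x) (hp_range x).1)
      (inv_nonneg.2 hθ), hstay]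
  exact lintegral_smul_dirac_add_smul_withDensity_apply ν (measurable_mhPi_density hp_meas)
    hp_meas.ennreal_ofReal (measurable_const.sub hp_meas).ennreal_ofReal hbalance hA

end MetropolisHastings

/-- Let `(E, ℰ)` be a measurable space, `ν` a probability
measure on `E`, and `p : E → [0,1)` measurable with
`θ = ∫ 1/(1 − p(x)) ν(dx) < ∞` (i.e. `1/(1 − p)` is `ν`-integrable).  Then
`π(dx) = ν(dx)/(θ(1 − p(x)))` is a probability measure, and `π` is invariant
for the kernel `Q(x, A) = p(x)·δ_x(A) + (1 − p(x))·ν(A)`: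
`∫ Q(x, A) π(dx) = π(A)` for every measurable `A`. -/
theorem mh_kernel_invariant_measure {E : Type*} [MeasurableSpace E]
    (ν : Measure E) [IsProbabilityMeasure ν] (p : E → ℝ)
    (hp_meas : Measurable p) (hp_range : ∀ x, p x ∈ Set.Ico (0 : ℝ) 1)
    (hp_int : Integrable (fun x => 1 / (1 - p x)) ν) :
    IsProbabilityMeasure (mhPi ν p) ∧
    ∀ A : Set E, MeasurableSet A →
      (∫⁻ x, mhQ ν p x A ∂(mhPi ν p)) = mhPi ν p A :=
  ⟨isProbabilityMeasure_mhPi hp_range hp_int, fun _ hA => lintegral_mhQ_apply hp_meas hp_range hA⟩
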